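/- For every natural number n ≥ 3, the following identity holds in ℚ: Σ_{i=2}^{n} Σ_{j=i}^{n} ( Σ_{s=0}^{j−i+1} C(i−1+n−j, i−1)·C(i−1+n−j, s+i)·C(2j−2i, j−i−s+1) − Σ_{s=0}^{j−i−3} C(i−1+n−j, i−1)·C(i−1+n−j, s+i)·C(2j−2i, j−i−s−3) ) = 2^{2n−1} + (n−1) − (2/n)·C(2n, n−2) − C(2n, n+1) − C(2n+1, n) + C(2n, n), where inner sums over s are empty when their upper bound is negative. -/

import Mathlib

/-!
Write `N = n - 1`, `d = j - i` and `m = N - d`, and let `c_d(k) = C(2d, d + |k|)`. The sum over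
`i` is a Vandermonde convolution, and in terms of `c_d` the two truncated sums over `t` merge into
`∑_t (C(2m, m + t + 1) - C(m, t + 1)) (c_d(t - 1) - c_d(t + 3))`.

The part with `C(m, t + 1)` is Vandermonde again for each `d`, followed by a hockey stick over `d`.
For the part with `C(2m, m + t + 1) = c_m(t + 1)` one sums over `d` first: `∑_d c_{N-d}(k) c_d(b)`
is the partial row sum `∑_{j ≤ N - |k| - |b|} C(2N + 1, j)`, because both sides obey the
recurrence `c_{m+1}(k) = c_m(k - 1) + 2 c_m(k) + c_m(k + 1)`. The resulting sum over `t`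
telescopes to twice `∑_{j ≤ N - 2} C(2N + 1, j)`, which is `4 ^ N` minus the two middle entries
of the row.
-/

open Finset

/-- The coefficient of `x ^ k` in `(x + 2 + x⁻¹) ^ m = x⁻ᵐ (1 + x) ^ (2 * m)`. -/
def centeredChoose (m : ℕ) (k : ℤ) : ℕ := (2 * m).choose (m + k.natAbs)

@[simp]
lemma centeredChoose_neg (m : ℕ) (k : ℤ) : centeredChoose m (-k) = centeredChoose m k := by
  simp [centeredChoose]

lemma centeredChoose_natCast (m j : ℕ) : centeredChoose m j = (2 * m).choose (m + j) := rfl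

lemma centeredChoose_eq_zero {m : ℕ} {k : ℤ} (h : m < k.natAbs) : centeredChoose m k = 0 :=
  Nat.choose_eq_zero_of_lt (by omega)

lemma choose_two_mul_eq_centeredChoose (m i : ℕ) :
    (2 * m).choose i = centeredChoose m (i - m) := by
  unfold centeredChoose
  rcases le_total i m with h | h
  · rw [show ((i : ℤ) - m).natAbs = m - i by omega]
    exact Nat.choose_symm_of_eq_add (by omega)
  · rw [show ((i : ℤ) - m).natAbs = i - m by omega, Nat.add_sub_cancel' h]

lemma Nat.choose_add_two_add_two (n k : ℕ) :
    (n + 2).choose (k + 2) = n.choose k + 2 * n.choose (k + 1) + n.choose (k + 2) := by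
  simp only [Nat.choose_succ_succ']
  ring

lemma centeredChoose_succ (m : ℕ) (k : ℤ) :
    centeredChoose (m + 1) k =
      centeredChoose m (k - 1) + 2 * centeredChoose m k + centeredChoose m (k + 1) := by
  have key : ∀ j : ℕ, centeredChoose (m + 1) j =
      centeredChoose m (j - 1) + 2 * centeredChoose m j + centeredChoose m (j + 1) := by
    rintro (_ | j)
    · simp only [centeredChoose, Nat.cast_zero, zero_sub, Int.natAbs_neg, Int.natAbs_one,
        Int.natAbs_zero, add_zero, zero_add]
      rcases m with _ | m
      · rfl
      · rw [show 2 * (m + 1 + 1) = 2 * (m + 1) + 2 by ring, Nat.choose_add_two_add_two,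
          Nat.choose_symm_of_eq_add (show 2 * (m + 1) = m + (m + 2) by ring)]
    · simp only [centeredChoose]
      rw [show ((j + 1 : ℕ) : ℤ) - 1 = ((j : ℕ) : ℤ) by push_cast; ring,
        show ((j + 1 : ℕ) : ℤ) + 1 = ((j + 2 : ℕ) : ℤ) by push_cast; ring]
      simp only [Int.natAbs_natCast]
      rw [show 2 * (m + 1) = 2 * m + 2 by ring, show m + 1 + (j + 1) = m + j + 2 by ring,
        Nat.choose_add_two_add_two]
      ring_nf
  obtain ⟨j, rfl | rfl⟩ := Int.eq_nat_or_neg k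
  · exact key j
  · rw [show -(j : ℤ) - 1 = -(j + 1) by ring, show -(j : ℤ) + 1 = -(j - 1) by ring]
    simp only [centeredChoose_neg]
    rw [key j]
    ring

lemma sum_range_succ_choose (q M : ℕ) :
    ∑ j ∈ range M, (q + 1).choose j =
      ∑ j ∈ range M, q.choose j + ∑ j ∈ range (M - 1), q.choose j := by
  rcases M with _ | M
  · simp
  · rw [sum_range_succ', sum_range_succ' (fun j => q.choose j)]
    simp only [Nat.choose_succ_succ', sum_add_distrib, Nat.choose_zero_right, Nat.add_sub_cancel]
    ring

lemma sum_range_add_two_choose (q M : ℕ) :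
    ∑ j ∈ range M, (q + 2).choose j =
      ∑ j ∈ range M, q.choose j + 2 * ∑ j ∈ range (M - 1), q.choose j +
        ∑ j ∈ range (M - 2), q.choose j := by
  rw [sum_range_succ_choose, sum_range_succ_choose, sum_range_succ_choose q (M - 1),
    show M - 1 - 1 = M - 2 by omega]
  ring

lemma choose_add_sum_range_choose (N s : ℕ) :
    (2 * N + 2).choose (N + 1 + s) + ∑ j ∈ range (N - s), (2 * N + 1).choose j =
      ∑ j ∈ range (N + 2 - s), (2 * N + 1).choose j := by
  rcases lt_trichotomy s (N + 1) with h | rfl | h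
  · rw [show N + 2 - s = N - s + 1 + 1 by omega, sum_range_succ, sum_range_succ,
      add_assoc _ ((2 * N + 1).choose (N - s)), ← Nat.choose_succ_succ',
      Nat.choose_symm_of_eq_add (show 2 * N + 2 = (N - s + 1) + (N + 1 + s) by omega)]
    ring
  · simp [show N + 2 - (N + 1) = 1 by omega, show N + 1 + (N + 1) = 2 * N + 2 by ring]
  · rw [Nat.choose_eq_zero_of_lt (by omega), show N - s = 0 by omega,
      show N + 2 - s = 0 by omega]
    simp

theorem sum_range_centeredChoose_mul_centeredChoose (N : ℕ) (k b : ℤ) :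
    ∑ d ∈ range (N + 1), centeredChoose (N - d) k * centeredChoose d b =
      ∑ j ∈ range (N + 1 - (k.natAbs + b.natAbs)), (2 * N + 1).choose j := by
  induction N generalizing b with
  | zero =>
    rcases Nat.eq_zero_or_pos (k.natAbs + b.natAbs) with h | h
    · rw [Int.natAbs_eq_zero.1 (by omega : k.natAbs = 0),
        Int.natAbs_eq_zero.1 (by omega : b.natAbs = 0)]
      rfl
    · rw [show 0 + 1 - (k.natAbs + b.natAbs) = 0 by omega, sum_range_zero, sum_range_one]
      rcases Nat.eq_zero_or_pos k.natAbs with hk | hk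
      · rw [mul_comm]
        exact mul_eq_zero_of_left (centeredChoose_eq_zero (by omega)) _
      · exact mul_eq_zero_of_left (centeredChoose_eq_zero (by omega)) _
  | succ N ih =>
    suffices h : ∀ j : ℕ,
        ∑ d ∈ range (N + 1 + 1), centeredChoose (N + 1 - d) k * centeredChoose d j =
          ∑ i ∈ range (N + 1 + 1 - (k.natAbs + j)), (2 * (N + 1) + 1).choose i by
      obtain ⟨j, rfl | rfl⟩ := Int.eq_nat_or_neg b <;> simpa using h j
    intro j
    have hrec : ∑ d ∈ range (N + 1), centeredChoose (N - d) k * centeredChoose (d + 1) j =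
        ∑ i ∈ range (N + 1 - (k.natAbs + ((j : ℤ) - 1).natAbs)), (2 * N + 1).choose i +
          2 * ∑ i ∈ range (N + 1 - (k.natAbs + j)), (2 * N + 1).choose i +
          ∑ i ∈ range (N + 1 - (k.natAbs + (j + 1))), (2 * N + 1).choose i := by
      simp only [centeredChoose_succ, mul_add, sum_add_distrib, mul_left_comm _ 2, ← mul_sum, ih]
      rw [show ((j : ℤ) + 1).natAbs = j + 1 by omega, Int.natAbs_natCast]
    rw [sum_range_succ', Nat.sub_zero]
    simp only [Nat.add_sub_add_right]
    rw [hrec, show 2 * (N + 1) + 1 = 2 * N + 1 + 2 by ring, sum_range_add_two_choose]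
    rcases j with _ | j
    · have hc : centeredChoose (N + 1) k * centeredChoose 0 (0 : ℕ) =
          (2 * N + 2).choose (N + 1 + k.natAbs) := by
        simp [centeredChoose, mul_add]
      have hb := choose_add_sum_range_choose N k.natAbs
      rw [hc, show (((0 : ℕ) : ℤ) - 1).natAbs = 1 by rfl,
        show N + 1 + 1 - (k.natAbs + 0) - 1 = N + 1 - (k.natAbs + 0) by omega,
        show N + 1 + 1 - (k.natAbs + 0) - 2 = N - k.natAbs by omega,
        show N + 1 + 1 - (k.natAbs + 0) = N + 2 - k.natAbs by omega,
        show N + 1 - (k.natAbs + 1) = N - k.natAbs by omega]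
      omega
    · rw [centeredChoose_eq_zero (m := 0) (k := (j + 1 : ℕ)) (by omega), mul_zero, add_zero,
        show (((j + 1 : ℕ) : ℤ) - 1).natAbs = j by omega,
        show N + 1 + 1 - (k.natAbs + (j + 1)) - 1 = N + 1 - (k.natAbs + (j + 1)) by omega,
        show N + 1 + 1 - (k.natAbs + (j + 1)) - 2 = N + 1 - (k.natAbs + (j + 1 + 1)) by omega,
        show N + 1 + 1 - (k.natAbs + (j + 1)) = N + 1 - (k.natAbs + j) by omega]

lemma sum_range_choose_mul_choose_add (m q p : ℕ) {K : ℕ} (hK : m < K) :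
    ∑ u ∈ range K, m.choose u * q.choose (p + u) = (m + q).choose (m + p) := by
  have hvan {L : ℕ} (hL : m < L) (g : ℕ → ℕ) :
      ∑ u ∈ range L, m.choose u * g u = ∑ u ∈ range (m + 1), m.choose u * g u :=
    eventually_constant_sum (fun u hu => by rw [Nat.choose_eq_zero_of_lt hu, zero_mul]) hL
  rw [Nat.add_choose_eq, Nat.sum_antidiagonal_eq_sum_range_succ_mk, hvan hK,
    hvan (L := m + p + 1) (by omega), ← sum_range_reflect]
  refine sum_congr rfl fun u hu => ?_
  rw [mem_range] at hu
  rw [Nat.choose_symm_of_eq_add (show m = (m + 1 - 1 - u) + u by omega)]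
  congr 2
  omega

lemma sum_choose_succ_mul_centeredChoose_sub_one (m d : ℕ) {K : ℕ} (hK : m ≤ K) :
    ∑ t ∈ range K, m.choose (t + 1) * centeredChoose d (t - 1) + (2 * d).choose (d + 2) =
      (m + 2 * d).choose (d + 2) := by
  have hvan {L : ℕ} (hL : min m (d + 2) ≤ L) :
      ∑ t ∈ range L, m.choose (t + 1) * centeredChoose d (t - 1) =
        ∑ t ∈ range (min m (d + 2)), m.choose (t + 1) * centeredChoose d (t - 1) := by
    refine eventually_constant_sum (fun t ht => ?_) hL
    rcases lt_or_ge t m with h | h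
    · rw [centeredChoose_eq_zero (by omega), mul_zero]
    · rw [Nat.choose_eq_zero_of_lt (by omega), zero_mul]
  rw [Nat.add_choose_eq, Nat.sum_antidiagonal_eq_sum_range_succ_mk, sum_range_succ',
    Nat.choose_zero_right, one_mul, Nat.sub_zero, hvan (by omega), ← hvan (L := d + 2) (by omega)]
  congr 1
  refine sum_congr rfl fun t ht => ?_
  rw [mem_range] at ht
  rw [choose_two_mul_eq_centeredChoose, ← centeredChoose_neg]
  congr 2
  rw [Nat.cast_sub (by omega)]
  push_cast
  ring

lemma sum_choose_succ_mul_centeredChoose_add_three (m d : ℕ) {K : ℕ} (hK : m ≤ K) :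
    ∑ t ∈ range K, m.choose (t + 1) * centeredChoose d (t + 3) + (2 * d).choose (d + 2) =
      (m + 2 * d).choose (m + (d + 2)) := by
  rw [← sum_range_choose_mul_choose_add m (2 * d) (d + 2) (K := K + 1) (by omega),
    sum_range_succ', Nat.choose_zero_right, one_mul, add_zero]
  congr 1
  refine sum_congr rfl fun t _ => ?_
  rw [show (t : ℤ) + 3 = ((t + 3 : ℕ) : ℤ) by push_cast; ring, centeredChoose_natCast]
  ring_nf

lemma sum_range_choose_eq_choose_add_one (n k : ℕ) :
    ∑ i ∈ range n, i.choose k = n.choose (k + 1) := by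
  induction n with
  | zero => simp
  | succ n ih => rw [sum_range_succ, ih, Nat.choose_succ_succ', add_comm]

lemma sum_range_add_choose_add_choose (N k : ℕ) :
    ∑ d ∈ range N, (N + d).choose k + N.choose (k + 1) = (2 * N).choose (k + 1) := by
  rw [← sum_range_choose_eq_choose_add_one, ← sum_range_choose_eq_choose_add_one, two_mul,
    sum_range_add, add_comm]

lemma sum_Icc_sum_Icc_eq_sum_range_sum_Icc {M : Type*} [AddCommMonoid M] (g : ℕ → ℕ → M)
    (a n : ℕ) :
    ∑ i ∈ Icc a n, ∑ j ∈ Icc i n, g i j =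
      ∑ d ∈ range (n + 1 - a), ∑ i ∈ Icc a (n - d), g i (i + d) := by
  calc _ = ∑ i ∈ Icc a n, ∑ d ∈ range (n + 1 - i), g i (i + d) := by
        refine sum_congr rfl fun i _ => ?_
        rw [← Ico_add_one_right_eq_Icc, sum_Ico_eq_sum_range]
    _ = _ := sum_comm' fun i d => by simp only [mem_Icc, mem_range]; omega

lemma sum_range_sub_max_one {G : Type*} [AddCommGroup G] (f : ℕ → G) {K : ℕ} (hK : 0 < K) :
    ∑ t ∈ range K, (f (max t 1) - f (t + 2)) = 2 • f 1 - f K - f (K + 1) := by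
  induction K, hK using Nat.le_induction with
  | base => simp [two_nsmul]
  | succ K hK ih =>
    rw [sum_range_succ, ih, max_eq_left hK]
    abel

section

variable {R : Type*} [CommRing R]

lemma sum_range_mul_choose_sub_sum_range_mul_choose (w : ℕ → R) {d K : ℕ} (hK : d + 2 ≤ K) :
    ∑ t ∈ range (d + 2), w t * ((2 * d).choose (d + 1 - t) : R) -
        ∑ t ∈ range (d - 2), w t * ((2 * d).choose (d - 3 - t) : R) =
      ∑ t ∈ range K, w t * (centeredChoose d (t - 1) - centeredChoose d (t + 3)) := by
  simp only [mul_sub, sum_sub_distrib]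
  congr 1
  · rw [eventually_constant_sum (N := d + 2) (n := K) (fun t ht => ?_) hK]
    · refine sum_congr rfl fun t ht => ?_
      rw [mem_range] at ht
      rw [choose_two_mul_eq_centeredChoose, ← centeredChoose_neg]
      congr 3
      push_cast [show t ≤ d + 1 by omega]
      ring
    · rw [centeredChoose_eq_zero (by omega), Nat.cast_zero, mul_zero]
  · rw [eventually_constant_sum (N := d - 2) (n := K) (fun t ht => ?_) (by omega)]
    · refine sum_congr rfl fun t ht => ?_
      rw [mem_range] at ht
      rw [choose_two_mul_eq_centeredChoose, ← centeredChoose_neg]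
      congr 3
      push_cast [show t ≤ d - 3 by omega, show 3 ≤ d by omega]
      ring
    · rw [centeredChoose_eq_zero (by omega), Nat.cast_zero, mul_zero]

lemma sum_Icc_choose_sub_one_mul_choose (m t : ℕ) :
    ∑ i ∈ Icc 2 (m + 1), (m.choose (i - 1) : R) * m.choose (t + i) =
      centeredChoose m (t + 1) - m.choose (t + 1) := by
  have h := congrArg (Nat.cast : ℕ → R)
    (sum_range_choose_mul_choose_add m m (t + 1) (K := m + 1) (by omega))
  rw [sum_range_succ'] at h
  push_cast at h
  rw [show (t : ℤ) + 1 = ((t + 1 : ℕ) : ℤ) by push_cast; ring, centeredChoose_natCast,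
    two_mul, ← h, ← Ico_add_one_right_eq_Icc, sum_Ico_eq_sum_range]
  simp only [Nat.choose_zero_right, Nat.cast_one, one_mul, add_zero, add_sub_cancel_right]
  refine sum_congr (by simp) fun u _ => ?_
  congr 3 <;> omega

lemma sum_sum_centeredChoose_mul_centeredChoose_sub (N K : ℕ) (hK : N < 2 * K) :
    ∑ d ∈ range N, ∑ t ∈ range K, (centeredChoose (N - d) (t + 1) : R) *
        (centeredChoose d (t - 1) - centeredChoose d (t + 3)) =
      2 * ∑ j ∈ range (N - 1), ((2 * N + 1).choose j : R) := by
  set f : ℕ → R := fun s => ∑ j ∈ range (N + 1 - 2 * s), ((2 * N + 1).choose j : R)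
  have hconv (t : ℕ) : ∑ d ∈ range (N + 1), (centeredChoose (N - d) (t + 1) : R) *
      (centeredChoose d (t - 1) - centeredChoose d (t + 3)) = f (max t 1) - f (t + 2) := by
    simp only [mul_sub, sum_sub_distrib, ← Nat.cast_mul, ← Nat.cast_sum,
      sum_range_centeredChoose_mul_centeredChoose, f]
    rw [show ((t : ℤ) + 1).natAbs + ((t : ℤ) - 1).natAbs = 2 * max t 1 by omega,
      show ((t : ℤ) + 1).natAbs + ((t : ℤ) + 3).natAbs = 2 * (t + 2) by omega]
  have hf {s : ℕ} (hs : N < 2 * s) : f s = 0 := by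
    simp [f, show N + 1 - 2 * s = 0 by omega]
  calc _ = ∑ d ∈ range (N + 1), ∑ t ∈ range K, (centeredChoose (N - d) (t + 1) : R) *
        (centeredChoose d (t - 1) - centeredChoose d (t + 3)) := by
        have h0 (t : ℕ) : centeredChoose 0 ((t : ℤ) + 1) = 0 :=
          centeredChoose_eq_zero (by omega)
        simp [sum_range_succ, h0]
    _ = 2 • f 1 - f K - f (K + 1) := by
      rw [sum_comm, sum_congr rfl fun t _ => hconv t, sum_range_sub_max_one f (by omega)]
    _ = _ := by
      rw [hf hK, hf (s := K + 1) (by omega), two_nsmul, two_mul, sub_zero, sub_zero]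
      simp only [f, show N + 1 - 2 * 1 = N - 1 by omega]

lemma sum_choose_succ_mul_centeredChoose_sub (m d : ℕ) {K : ℕ} (hK : m ≤ K) :
    ∑ t ∈ range K,
        (m.choose (t + 1) : R) * (centeredChoose d (t - 1) - centeredChoose d (t + 3)) =
      (m + 2 * d).choose (d + 2) - (m + 2 * d).choose (m + (d + 2)) := by
  have h1 := congrArg (Nat.cast : ℕ → R) (sum_choose_succ_mul_centeredChoose_sub_one m d hK)
  have h2 := congrArg (Nat.cast : ℕ → R) (sum_choose_succ_mul_centeredChoose_add_three m d hK)
  push_cast at h1 h2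
  simp only [mul_sub, sum_sub_distrib]
  linear_combination h1 - h2

lemma sum_sum_choose_succ_mul_centeredChoose_sub (N K : ℕ) (hN : 2 ≤ N) (hK : N ≤ K) :
    ∑ d ∈ range N, ∑ t ∈ range K, ((N - d).choose (t + 1) : R) *
        (centeredChoose d (t - 1) - centeredChoose d (t + 3)) =
      (2 * N).choose (N - 1) - N - (2 * N).choose (N + 3) := by
  have hterm : ∀ d ∈ range N, ∑ t ∈ range K, ((N - d).choose (t + 1) : R) *
      (centeredChoose d (t - 1) - centeredChoose d (t + 3)) =
        (N + d).choose (N - 2) - (N + d).choose (N + 2) := fun d hd => by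
    rw [mem_range] at hd
    rw [sum_choose_succ_mul_centeredChoose_sub _ _ (by omega),
      show N - d + 2 * d = N + d by omega, show N - d + (d + 2) = N + 2 by omega,
      Nat.choose_symm_of_eq_add (show N + d = d + 2 + (N - 2) by omega)]
  have h1 := congrArg (Nat.cast : ℕ → R) (sum_range_add_choose_add_choose N (N - 2))
  have h2 := congrArg (Nat.cast : ℕ → R) (sum_range_add_choose_add_choose N (N + 2))
  rw [show N - 2 + 1 = N - 1 by omega, Nat.choose_symm_of_eq_add (show N = N - 1 + 1 by omega),
    Nat.choose_one_right] at h1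
  rw [Nat.choose_eq_zero_of_lt (by omega : N < N + 2 + 1)] at h2
  push_cast at h1 h2
  rw [sum_congr rfl hterm, sum_sub_distrib]
  linear_combination h1 - h2

lemma add_one_mul_choose_sub_choose (N : ℕ) (hN : 2 ≤ N) :
    ((N : R) + 1) * ((2 * N).choose (N + 1) - (2 * N).choose (N + 3)) =
      2 * (2 * N + 2).choose (N + 3) := by
  obtain ⟨M, rfl⟩ : ∃ M, N = M + 2 := ⟨N - 2, by omega⟩
  have e1 := Nat.choose_succ_right_eq (2 * (M + 2)) (M + 3)
  have e2 := Nat.choose_succ_right_eq (2 * (M + 2)) (M + 4)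
  have e3 := Nat.choose_add_two_add_two (2 * (M + 2)) (M + 3)
  rw [show 2 * (M + 2) - (M + 3) = M + 1 by omega] at e1
  rw [show 2 * (M + 2) - (M + 4) = M by omega] at e2
  simp only [show M + 2 + 1 = M + 3 by ring, show M + 2 + 3 = M + 5 by ring,
    show M + 3 + 1 = M + 4 by ring] at *
  have f1 := congrArg (Nat.cast : ℕ → R) e1
  have f2 := congrArg (Nat.cast : ℕ → R) e2
  have f3 := congrArg (Nat.cast : ℕ → R) e3
  push_cast at f1 f2 f3 ⊢
  linear_combination (-1) * f1 - f2 - 2 * f3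

end

lemma two_mul_sum_range_choose_sub_eq (N : ℕ) (hN : 2 ≤ N) :
    2 * ∑ j ∈ range (N - 1), ((2 * N + 1).choose j : ℚ) -
        ((2 * N).choose (N - 1) - N - (2 * N).choose (N + 3)) =
      2 ^ (2 * (N + 1) - 1) + (((N + 1 : ℕ) : ℚ) - 1) -
        (2 / ((N + 1 : ℕ) : ℚ)) * ((2 * (N + 1)).choose (N + 1 - 2) : ℚ) -
        ((2 * (N + 1)).choose (N + 1 + 1) : ℚ) - ((2 * (N + 1) + 1).choose (N + 1) : ℚ) +
        ((2 * (N + 1)).choose (N + 1) : ℚ) := by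
  have h_half : ∑ j ∈ range (N - 1), (2 * N + 1).choose j + (2 * N + 1).choose (N - 1) +
      (2 * N + 1).choose N = 4 ^ N := by
    rw [← Nat.sum_range_choose_halfway N, show N + 1 = N - 1 + 1 + 1 by omega, sum_range_succ,
      sum_range_succ, show N - 1 + 1 = N by omega]
  have h_pascal₁ := Nat.choose_succ_succ' (2 * N + 2) N
  have h_pascal₂ := Nat.choose_succ_succ' (2 * N + 1) (N - 1)
  rw [show N - 1 + 1 = N by omega, show 2 * N + 1 + 1 = 2 * N + 2 by ring] at h_pascal₂
  have h_symm₁ : (2 * N + 2).choose (N + 2) = (2 * N + 2).choose N :=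
    Nat.choose_symm_of_eq_add (by ring)
  have h_symm₂ : (2 * N + 2).choose (N - 1) = (2 * N + 2).choose (N + 3) :=
    Nat.choose_symm_of_eq_add (by omega)
  have h_symm₃ : (2 * N).choose (N - 1) = (2 * N).choose (N + 1) :=
    Nat.choose_symm_of_eq_add (by omega)
  rw [show 2 * (N + 1) = 2 * N + 2 by ring, show N + 1 - 2 = N - 1 by omega,
    show 2 * N + 2 - 1 = 2 * N + 1 by omega, h_symm₁, h_symm₂, h_symm₃]
  have h_div : 2 / ((N : ℚ) + 1) * (2 * N + 2).choose (N + 3) =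
      (2 * N).choose (N + 1) - (2 * N).choose (N + 3) := by
    field_simp
    linear_combination -add_one_mul_choose_sub_choose (R := ℚ) N hN
  have h_pow : (2 : ℚ) ^ (2 * N + 1) = 2 * 4 ^ N := by
    rw [pow_succ, pow_mul]
    norm_num
    ring
  have h_half' := congrArg (Nat.cast : ℕ → ℚ) h_half
  have h_pascal₁' := congrArg (Nat.cast : ℕ → ℚ) h_pascal₁
  have h_pascal₂' := congrArg (Nat.cast : ℕ → ℚ) h_pascal₂
  push_cast at h_half' h_pascal₁' h_pascal₂' ⊢
  rw [h_div, h_pow]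
  linear_combination 2 * h_half' + h_pascal₁' + 2 * h_pascal₂'

def t3Summand (n i j : ℕ) : ℚ :=
  (∑ t ∈ Finset.range (j - i + 2),
      (Nat.choose (i - 1 + n - j) (i - 1) : ℚ) * (Nat.choose (i - 1 + n - j) (t + i) : ℚ) *
        (Nat.choose (2 * (j - i)) (j - i + 1 - t) : ℚ)) -
    (∑ t ∈ Finset.range (j - i - 2),
      (Nat.choose (i - 1 + n - j) (i - 1) : ℚ) * (Nat.choose (i - 1 + n - j) (t + i) : ℚ) *
        (Nat.choose (2 * (j - i)) (j - i - 3 - t) : ℚ))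

lemma t3Summand_add_right (N i d : ℕ) {K : ℕ} (hi : 1 ≤ i) (hK : d + 2 ≤ K) :
    t3Summand (N + 1) i (i + d) =
      ∑ t ∈ range K, ((N - d).choose (i - 1) * (N - d).choose (t + i) : ℚ) *
        (centeredChoose d (t - 1) - centeredChoose d (t + 3)) := by
  rw [t3Summand, Nat.add_sub_cancel_left, show i - 1 + (N + 1) - (i + d) = N - d by omega]
  exact sum_range_mul_choose_sub_sum_range_mul_choose _ hK

/-- The paper's Lemma (lem13, formula (72)): evaluation of the sum `T₃`. -/
theorem lemma_T3 (n : ℕ) (hn : 3 ≤ n) :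
    ∑ i ∈ Finset.Icc 2 n, ∑ j ∈ Finset.Icc i n,
        ((∑ t ∈ Finset.range (j - i + 2),
            (Nat.choose (i - 1 + n - j) (i - 1) : ℚ) * (Nat.choose (i - 1 + n - j) (t + i) : ℚ) *
              (Nat.choose (2 * (j - i)) (j - i + 1 - t) : ℚ)) -
          (∑ t ∈ Finset.range (j - i - 2),
            (Nat.choose (i - 1 + n - j) (i - 1) : ℚ) * (Nat.choose (i - 1 + n - j) (t + i) : ℚ) *
              (Nat.choose (2 * (j - i)) (j - i - 3 - t) : ℚ))) =
      2 ^ (2 * n - 1) + ((n : ℚ) - 1) - (2 / (n : ℚ)) * (Nat.choose (2 * n) (n - 2) : ℚ) -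
        (Nat.choose (2 * n) (n + 1) : ℚ) - (Nat.choose (2 * n + 1) n : ℚ) +
        (Nat.choose (2 * n) n : ℚ) := by
  obtain ⟨N, rfl⟩ : ∃ N, n = N + 1 := ⟨n - 1, by omega⟩
  have hN : 2 ≤ N := by omega
  change ∑ i ∈ Icc 2 (N + 1), ∑ j ∈ Icc i (N + 1), t3Summand (N + 1) i j = _
  have h_inner : ∀ d ∈ range N, ∑ i ∈ Icc 2 (N + 1 - d), t3Summand (N + 1) i (i + d) =
      ∑ t ∈ range (N + 2), ((centeredChoose (N - d) (t + 1) : ℚ) - (N - d).choose (t + 1)) *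
        (centeredChoose d (t - 1) - centeredChoose d (t + 3)) := fun d hd => by
    rw [mem_range] at hd
    rw [sum_congr rfl fun i hi => t3Summand_add_right N i d (K := N + 2)
        (by rw [mem_Icc] at hi; omega) (by omega),
      sum_comm, show N + 1 - d = N - d + 1 by omega]
    simp only [← sum_mul, sum_Icc_choose_sub_one_mul_choose]
  rw [sum_Icc_sum_Icc_eq_sum_range_sum_Icc, show N + 1 + 1 - 2 = N by omega,
    sum_congr rfl h_inner]
  simp only [sub_mul, sum_sub_distrib]
  rw [sum_sum_centeredChoose_mul_centeredChoose_sub N (N + 2) (by omega),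
    sum_sum_choose_succ_mul_centeredChoose_sub N (N + 2) hN (by omega)]
  exact two_mul_sum_range_choose_sub_eq N hN
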